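/- arXiv:2007.13378 — 3 statements merged into one kernel-verified Lean document; each statement's English description precedes it below -/
import Mathlib

section
/- The generating function for the weighted counts |U(n)| is ∑_n |U(n)| t^n = ∏_{k≥1} (1+t^k)^2/(1-t^k), where |U(n)| = ∑_{λ} 2^{a(λ)}, the sum being over partitions λ of 2n in which every odd part occurs an even number of times, and a(λ) is the number of distinct even parts of λ. -/
open PowerSeries Finset

/-- The geometric series `1/(1-t^k)` as a formal power series over `ℤ`. -/
noncomputable def geom (k : ℕ) : PowerSeries ℤ :=
  PowerSeries.invOfUnit (1 - PowerSeries.X ^ k) 1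

/-- A partition is symplectic-admissible if every odd part occurs with even multiplicity. -/
def SympAdmissible {n : ℕ} (l : Nat.Partition n) : Prop :=
  ∀ i ∈ l.parts, Odd i → Even (l.parts.count i)

instance {n : ℕ} : DecidablePred (SympAdmissible (n := n)) := fun l => by
  unfold SympAdmissible; infer_instance

/-- The number `a(λ)` of distinct even parts of a partition `λ`. -/
def evenPartsCount {n : ℕ} (l : Nat.Partition n) : ℕ :=
  (l.parts.toFinset.filter fun i => Even i).card

/-- `U n = ∑_{λ ⊢ 2n admissible} 2^{a(λ)}`, summing over partitions of `2n` in which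
every odd part has even multiplicity, each weighted by `2^{a(λ)}` with `a(λ)` the number
of distinct even parts. -/
def U (n : ℕ) : ℕ :=
  ∑ l : Nat.Partition (2 * n), if SympAdmissible l then 2 ^ evenPartsCount l else 0


lemma one_sub_X_pow_mul_geom (k : ℕ) (hk : 0 < k) : (1 - X ^ k) * geom k = 1 := by
  apply PowerSeries.mul_invOfUnit
  simp [constantCoeff_X, zero_pow hk.ne', Units.val_one]

lemma one_sub_X_pow_ne_zero (k : ℕ) (hk : 0 < k) : (1 - (X : PowerSeries ℤ) ^ k) ≠ 0 := by
  intro h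
  have := congrArg constantCoeff h
  simp [zero_pow hk.ne'] at this

lemma one_sub_X_pow_mul_indicator (k : ℕ) (hk : 0 < k) :
    (1 - (X : PowerSeries ℤ) ^ k) * (PowerSeries.mk fun m => if k ∣ m then (1:ℤ) else 0) = 1 := by
  ext m
  rw [sub_mul, one_mul, map_sub, coeff_X_pow_mul', coeff_mk]
  rcases Nat.eq_zero_or_pos m with rfl | hm
  · simp [hk, hk.ne']
  · rw [coeff_one, if_neg hm.ne']
    by_cases hdvd : k ∣ m
    · have hkm : k ≤ m := Nat.le_of_dvd hm hdvd
      rw [if_pos hdvd, if_pos hkm, coeff_mk, if_pos (Nat.dvd_sub hdvd dvd_rfl)]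
      ring
    · rw [if_neg hdvd]
      by_cases hkm : k ≤ m
      · rw [if_pos hkm, coeff_mk, if_neg, sub_zero]
        intro hd
        exact hdvd (by simpa [Nat.sub_add_cancel hkm] using Nat.dvd_add hd (dvd_refl k))
      · simp [hkm]

lemma geom_eq_mk (k : ℕ) (hk : 0 < k) :
    geom k = PowerSeries.mk fun m => if k ∣ m then (1:ℤ) else 0 :=
  mul_left_cancel₀ (one_sub_X_pow_ne_zero k hk)
    ((one_sub_X_pow_mul_geom k hk).trans (one_sub_X_pow_mul_indicator k hk).symm)

lemma evenF_eq (k : ℕ) (hk : 0 < k) :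
    (1 + (X : PowerSeries ℤ) ^ k) * geom k =
      PowerSeries.mk fun m => if k ∣ m then (if m = 0 then 1 else 2) else 0 := by
  rw [geom_eq_mk k hk]
  ext m
  rw [add_mul, one_mul, map_add, coeff_X_pow_mul']
  simp only [coeff_mk]
  rcases Nat.eq_zero_or_pos m with rfl | hm
  · simp [hk.ne', hk]
  · simp only [hm.ne', if_false]
    by_cases hdvd : k ∣ m
    · have hkm : k ≤ m := Nat.le_of_dvd hm hdvd
      rw [if_pos hdvd, if_pos hdvd, if_pos hkm, if_pos (Nat.dvd_sub hdvd dvd_rfl)]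
      norm_num
    · rw [if_neg hdvd, if_neg hdvd]
      by_cases hkm : k ≤ m
      · rw [if_pos hkm, if_neg, zero_add]
        intro hd
        exact hdvd (by simpa [Nat.sub_add_cancel hkm] using Nat.dvd_add hd (dvd_refl k))
      · simp [hkm]

noncomputable def Dfun (f : PowerSeries ℤ) : PowerSeries ℤ :=
  PowerSeries.mk fun m => if 2 ∣ m then PowerSeries.coeff (m / 2) f else 0

lemma coeff_Dfun (f : PowerSeries ℤ) (m : ℕ) :
    coeff m (Dfun f) = if 2 ∣ m then coeff (m / 2) f else 0 := coeff_mk _ _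

lemma coeff_Dfun_double (f : PowerSeries ℤ) (m : ℕ) :
    coeff (2 * m) (Dfun f) = coeff m f := by
  rw [coeff_Dfun, if_pos ⟨m, rfl⟩, Nat.mul_div_cancel_left _ (by norm_num)]

lemma Dfun_mul (f g : PowerSeries ℤ) : Dfun (f * g) = Dfun f * Dfun g := by
  ext m
  rw [coeff_Dfun]
  conv_rhs => rw [coeff_mul]
  simp only [coeff_Dfun, ite_zero_mul_ite_zero]
  rcases Nat.even_or_odd m with he | ho
  · obtain ⟨m', rfl⟩ : ∃ m', m = 2 * m' := ⟨m / 2, by obtain ⟨r, hr⟩ := he; omega⟩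
    rw [if_pos ⟨m', rfl⟩, Nat.mul_div_cancel_left _ (by norm_num), coeff_mul,
      ← Finset.sum_filter]
    apply Finset.sum_nbij' (i := fun p => (2 * p.1, 2 * p.2)) (j := fun p => (p.1 / 2, p.2 / 2))
    · rintro ⟨a, b⟩ hab
      rw [Finset.HasAntidiagonal.mem_antidiagonal] at hab
      simp only [Finset.mem_filter, Finset.HasAntidiagonal.mem_antidiagonal]
      exact ⟨by omega, ⟨a, rfl⟩, ⟨b, rfl⟩⟩
    · rintro ⟨a, b⟩ hab
      simp only [Finset.mem_filter, Finset.HasAntidiagonal.mem_antidiagonal] at hab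
      rw [Finset.HasAntidiagonal.mem_antidiagonal]
      obtain ⟨h1, ⟨a', rfl⟩, ⟨b', rfl⟩⟩ := hab
      omega
    · rintro ⟨a, b⟩ hab
      simp
    · rintro ⟨a, b⟩ hab
      simp only [Finset.mem_filter, Finset.HasAntidiagonal.mem_antidiagonal] at hab
      obtain ⟨h1, ⟨a', rfl⟩, ⟨b', rfl⟩⟩ := hab
      simp only [Prod.mk.injEq]
      omega
    · rintro ⟨a, b⟩ hab
      rw [Nat.mul_div_cancel_left _ (by norm_num), Nat.mul_div_cancel_left _ (by norm_num)]
  · rw [if_neg (by obtain ⟨r, hr⟩ := ho; omega)]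
    symm
    apply Finset.sum_eq_zero
    rintro ⟨a, b⟩ hab
    rw [Finset.HasAntidiagonal.mem_antidiagonal] at hab
    rw [if_neg]
    rintro ⟨⟨a', rfl⟩, ⟨b', rfl⟩⟩
    obtain ⟨r, hr⟩ := ho
    omega

lemma Dfun_add (f g : PowerSeries ℤ) : Dfun (f + g) = Dfun f + Dfun g := by
  ext m
  simp only [map_add, coeff_Dfun]
  split_ifs <;> simp

lemma Dfun_one : Dfun 1 = 1 := by
  ext m
  rw [coeff_Dfun]
  simp only [coeff_one]
  split_ifs <;> omega

noncomputable def DHom : PowerSeries ℤ →+* PowerSeries ℤ where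
  toFun := Dfun
  map_one' := Dfun_one
  map_mul' := Dfun_mul
  map_zero' := by ext m; simp [coeff_Dfun]
  map_add' := Dfun_add

lemma DHom_X : DHom X = X ^ 2 := by
  ext m
  show coeff m (Dfun X) = _
  rw [coeff_Dfun, coeff_X_pow]
  simp only [coeff_X]
  split_ifs <;> omega

lemma DHom_geom (k : ℕ) (hk : 0 < k) : DHom (geom k) = geom (2 * k) := by
  have h1 := congrArg DHom (one_sub_X_pow_mul_geom k hk)
  rw [map_mul, map_one, map_sub, map_one, map_pow, DHom_X, ← pow_mul] at h1
  exact mul_left_cancel₀ (one_sub_X_pow_ne_zero (2 * k) (by omega))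
    (h1.trans (one_sub_X_pow_mul_geom (2 * k) (by omega)).symm)

lemma same_gf (m : ℕ) :
    (∏ i ∈ range m, geom (2 * i + 1)) * (∏ i ∈ range m, (1 - (X : PowerSeries ℤ) ^ (m + i + 1))) =
      ∏ i ∈ range m, (1 + (X : PowerSeries ℤ) ^ (i + 1)) := by
  induction m with
  | zero => simp
  | succ m ih =>
    set π₀ : PowerSeries ℤ := ∏ i ∈ range m, (1 - X ^ (m + 1 + i + 1)) with hπ₀
    set π₁ : PowerSeries ℤ := ∏ i ∈ range m, geom (2 * i + 1) with hπ₁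
    set π₂ : PowerSeries ℤ := ∏ i ∈ range m, (1 - X ^ (m + i + 1)) with hπ₂
    set π₃ : PowerSeries ℤ := ∏ i ∈ range m, (1 + X ^ (i + 1)) with hπ₃
    calc
      (∏ i ∈ range (m + 1), geom (2 * i + 1)) *
            ∏ i ∈ range (m + 1), (1 - X ^ (m + 1 + i + 1)) =
          π₁ * geom (2 * m + 1) * (π₀ * (1 - X ^ (m + 1 + m + 1))) := by
        rw [prod_range_succ _ m, ← hπ₁, prod_range_succ _ m, ← hπ₀]
      _ = π₁ * geom (2 * m + 1) * (π₀ * ((1 + X ^ (m + 1)) * (1 - X ^ (m + 1)))) := by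
        rw [← sq_sub_sq, one_pow, add_assoc _ m 1, ← two_mul (m + 1), pow_mul']
      _ = π₀ * (1 - X ^ (m + 1)) * geom (2 * m + 1) * (π₁ * (1 + X ^ (m + 1))) := by ring
      _ = (∏ i ∈ range (m + 1), (1 - X ^ (m + 1 + i))) * geom (2 * m + 1) *
            (π₁ * (1 + X ^ (m + 1))) := by
        rw [prod_range_succ', add_zero, hπ₀]; simp_rw [← add_assoc]
      _ = π₂ * (1 - X ^ (m + 1 + m)) * geom (2 * m + 1) * (π₁ * (1 + X ^ (m + 1))) := by
        rw [add_right_comm, hπ₂, ← prod_range_succ]; simp_rw [add_right_comm]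
      _ = π₂ * (1 - X ^ (2 * m + 1)) * geom (2 * m + 1) * (π₁ * (1 + X ^ (m + 1))) := by
        rw [two_mul, add_right_comm _ m 1]
      _ = (1 - X ^ (2 * m + 1)) * geom (2 * m + 1) * π₂ * (π₁ * (1 + X ^ (m + 1))) := by ring
      _ = π₂ * (π₁ * (1 + X ^ (m + 1))) := by
        rw [one_sub_X_pow_mul_geom _ (by omega), one_mul]
      _ = π₁ * π₂ * (1 + X ^ (m + 1)) := by ring
      _ = π₃ * (1 + X ^ (m + 1)) := by rw [ih]
      _ = _ := by rw [prod_range_succ]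

lemma same_coeffs (m n : ℕ) (h : n ≤ m) :
    coeff n (∏ i ∈ range m, geom (2 * i + 1)) =
      coeff n (∏ i ∈ range m, (1 + (X : PowerSeries ℤ) ^ (i + 1))) := by
  rw [← same_gf, coeff_mul_prod_one_sub_of_lt_order]
  rintro i -
  rw [order_X_pow]
  exact mod_cast Nat.lt_succ_of_le (le_add_right h)

def partFinsupp {N : ℕ} (p : Nat.Partition N) : ℕ →₀ ℕ where
  support := p.parts.toFinset
  toFun := fun i => p.parts.count i * i
  mem_support_toFun := fun i => by
    simp only [Multiset.mem_toFinset, ne_eq, mul_eq_zero, Multiset.count_eq_zero, not_or, not_not]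
    constructor
    · intro h
      exact ⟨h, (p.parts_pos h).ne'⟩
    · exact fun h => h.1

lemma partFinsupp_apply {N : ℕ} (p : Nat.Partition N) (i : ℕ) :
    partFinsupp p i = p.parts.count i * i := rfl

lemma weightedGF (N : ℕ) (s : Finset ℕ) (hs : ∀ i ∈ s, 0 < i) (w : ℕ → ℕ → ℤ) :
    ∑ p ∈ Finset.univ.filter (fun p : Nat.Partition N => ∀ j ∈ p.parts, j ∈ s),
        ∏ i ∈ s, w i (p.parts.count i)
      = coeff N (∏ i ∈ s, PowerSeries.mk fun m => if i ∣ m then w i (m / i) else 0) := by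
  classical
  rw [coeff_prod]
  simp only [coeff_mk]
  simp only [Finset.prod_ite_zero]
  rw [← Finset.sum_filter]
  apply Finset.sum_bij' (i := fun p _ => partFinsupp p)
    (j := fun l hl =>
      { parts := ∑ i ∈ s, Multiset.replicate (l i / i) i
        parts_pos := fun {i} hi => by
          rw [Multiset.mem_sum] at hi
          obtain ⟨j, hj, hij⟩ := hi
          rw [Multiset.eq_of_mem_replicate hij]
          exact hs j hj
        parts_sum := by
          simp only [Finset.mem_filter, Finset.mem_finsuppAntidiag] at hl
          rw [Multiset.sum_sum]
          simp_rw [Multiset.sum_replicate, Nat.nsmul_eq_mul]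
          rw [← hl.1.1]
          exact Finset.sum_congr rfl fun i hi => Nat.div_mul_cancel (hl.2 i hi) })
  case hi =>
    intro p hp
    simp only [Finset.mem_filter, Finset.mem_univ, true_and] at hp
    simp only [Finset.mem_filter, Finset.mem_finsuppAntidiag]
    have hsub : p.parts.toFinset ⊆ s := fun i hi => hp i (Multiset.mem_toFinset.mp hi)
    refine ⟨⟨?_, hsub⟩, fun i _ => dvd_mul_left i _⟩
    conv_rhs => rw [← p.parts_sum]
    rw [Finset.sum_multiset_count_of_subset _ s hsub]
    simp [partFinsupp_apply, smul_eq_mul]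
    rfl
  case hj =>
    intro l hl
    simp only [Finset.mem_filter, Finset.mem_univ, true_and]
    intro j hj
    obtain ⟨i, hi, hji⟩ := Multiset.mem_sum.mp hj
    rwa [Multiset.eq_of_mem_replicate hji]
  case left_neg =>
    intro p hp
    simp only [Finset.mem_filter, Finset.mem_univ, true_and] at hp
    apply Nat.Partition.ext
    ext i
    simp only
    rw [Multiset.count_sum']
    simp_rw [Multiset.count_replicate]
    rw [Finset.sum_ite_eq' s i]
    split_ifs with hi
    · rw [partFinsupp_apply, Nat.mul_div_cancel _ (hs i hi)]
    · rw [eq_comm, Multiset.count_eq_zero]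
      exact fun hmem => hi (hp i hmem)
  case right_neg =>
    intro l hl
    simp only [Finset.mem_filter, Finset.mem_finsuppAntidiag] at hl
    apply Finsupp.ext
    intro i
    rw [partFinsupp_apply]
    simp only
    rw [Multiset.count_sum']
    simp_rw [Multiset.count_replicate]
    rw [Finset.sum_ite_eq' s i]
    split_ifs with hi
    · exact Nat.div_mul_cancel (hl.2 i hi)
    · rw [zero_mul, eq_comm, ← Finsupp.notMem_support_iff]
      exact fun hmem => hi (hl.1.2 hmem)
  case h =>
    intro p hp
    refine Finset.prod_congr rfl fun i hi => ?_
    rw [partFinsupp_apply, Nat.mul_div_cancel _ (hs i hi)]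

/-- `f` is `1 + O(X^(N+1))`. -/
def LO (N : ℕ) (f : PowerSeries ℤ) : Prop :=
  constantCoeff f = 1 ∧ ∀ b, 0 < b → b ≤ N → coeff b f = 0

lemma LO_mul {N : ℕ} {f g : PowerSeries ℤ} (hf : LO N f) (hg : LO N g) : LO N (f * g) := by
  constructor
  · rw [map_mul, hf.1, hg.1, one_mul]
  · intro b hb hbN
    rw [coeff_mul]
    apply Finset.sum_eq_zero
    rintro ⟨x, y⟩ hxy
    rw [Finset.HasAntidiagonal.mem_antidiagonal] at hxy
    rcases Nat.eq_zero_or_pos x with rfl | hx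
    · rw [hg.2 y (by omega) (by omega), mul_zero]
    · rw [hf.2 x hx (by omega), zero_mul]

lemma LO_geom {N k : ℕ} (hk : N < k) (hk0 : 0 < k) : LO N (geom k) := by
  rw [geom_eq_mk k hk0]
  constructor
  · show (if k ∣ 0 then (1:ℤ) else 0) = 1
    simp
  · intro b hb hbN
    rw [coeff_mk, if_neg]
    intro hd
    have := Nat.le_of_dvd hb hd
    omega

lemma LO_one_add_X_pow {N k : ℕ} (hk : N < k) : LO N (1 + (X : PowerSeries ℤ) ^ k) := by
  constructor
  · rw [map_add, map_pow, constantCoeff_one, constantCoeff_X, zero_pow (by omega), add_zero]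
  · intro b hb hbN
    rw [map_add, coeff_one, if_neg hb.ne', coeff_X_pow, if_neg (by omega), add_zero]

lemma coeff_mul_LO {N : ℕ} {f g : PowerSeries ℤ} (hg : LO N g) :
    coeff N (f * g) = coeff N f := by
  rw [coeff_mul]
  rw [Finset.sum_eq_single_of_mem (N, 0) (by simp)]
  · show coeff N f * coeff 0 g = coeff N f
    rw [coeff_zero_eq_constantCoeff, hg.1, mul_one]
  · rintro ⟨x, y⟩ hxy hne
    rw [Finset.HasAntidiagonal.mem_antidiagonal] at hxy
    have hy : 0 < y := by
      rcases Nat.eq_zero_or_pos y with rfl | h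
      · exact absurd (by omega : x = N) (by simpa using hne)
      · exact h
    rw [hg.2 y hy (by omega), mul_zero]

lemma coeff_mul_congr_left {N : ℕ} {f f' g : PowerSeries ℤ}
    (h : ∀ a ≤ N, coeff a f = coeff a f') :
    coeff N (f * g) = coeff N (f' * g) := by
  rw [coeff_mul, coeff_mul]
  refine Finset.sum_congr rfl fun p hp => ?_
  rw [Finset.HasAntidiagonal.mem_antidiagonal] at hp
  rw [h p.1 (by omega)]

/-- The weight of multiplicity `c` at part size `i` for symplectic-admissible counting. -/
def wfun (i c : ℕ) : ℤ :=
  if Odd i then (if Even c then 1 else 0) else (if c = 0 then 1 else 2)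

lemma prod_wfun (n : ℕ) (p : Nat.Partition (2 * n))
    (hsub : ∀ j ∈ p.parts, j ∈ Finset.Icc 1 (2 * n)) :
    ∏ i ∈ Finset.Icc 1 (2 * n), wfun i (p.parts.count i)
      = if SympAdmissible p then (2 : ℤ) ^ evenPartsCount p else 0 := by
  classical
  set s := Finset.Icc 1 (2 * n) with hs
  rw [← Finset.prod_filter_mul_prod_filter_not s (fun i => Odd i)]
  have h1 : ∏ i ∈ s.filter (fun i => Odd i), wfun i (p.parts.count i)
      = if SympAdmissible p then (1 : ℤ) else 0 := by
    rw [Finset.prod_congr rfl (fun i hi => by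
      simp only [wfun]; rw [if_pos (Finset.mem_filter.mp hi).2] :
        ∀ i ∈ s.filter (fun i => Odd i), wfun i (p.parts.count i)
          = if Even (p.parts.count i) then (1:ℤ) else 0)]
    rw [Finset.prod_boole]
    by_cases hsymp : SympAdmissible p
    · rw [if_pos hsymp, if_pos]
      intro i hi
      rw [Finset.mem_filter] at hi
      by_cases hip : i ∈ p.parts
      · exact hsymp i hip hi.2
      · rw [Multiset.count_eq_zero_of_notMem hip]; exact Even.zero
    · rw [if_neg hsymp, if_neg]
      intro hall
      apply hsymp
      intro i hip hio
      exact hall i (Finset.mem_filter.mpr ⟨hsub i hip, hio⟩)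
  have h2 : ∏ i ∈ s.filter (fun i => ¬Odd i), wfun i (p.parts.count i)
      = (2 : ℤ) ^ evenPartsCount p := by
    rw [Finset.prod_congr rfl (fun i hi => by
      simp only [wfun]; rw [if_neg (Finset.mem_filter.mp hi).2] :
        ∀ i ∈ s.filter (fun i => ¬Odd i), wfun i (p.parts.count i)
          = if p.parts.count i = 0 then (1:ℤ) else 2)]
    rw [Finset.prod_ite, Finset.prod_const_one, one_mul, Finset.prod_const]
    congr 1
    rw [evenPartsCount]
    congr 1
    ext i
    simp only [Finset.mem_filter, Finset.mem_filter, Multiset.mem_toFinset, hs, Finset.mem_Icc,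
      ← Multiset.count_pos, Nat.pos_iff_ne_zero, ← Nat.not_odd_iff_even]
    constructor
    · intro ⟨⟨_, hodd⟩, hc⟩
      exact ⟨hc, hodd⟩
    · intro ⟨hc, hodd⟩
      have := hsub i (Multiset.count_pos.mp (Nat.pos_of_ne_zero hc))
      rw [Finset.mem_Icc] at this
      exact ⟨⟨this, hodd⟩, hc⟩
  rw [h1, h2]
  split_ifs <;> ring

lemma U_coeff (n : ℕ) :
    (U n : ℤ) = coeff (2 * n) (∏ i ∈ Finset.Icc 1 (2 * n),
      if Odd i then geom (2 * i) else (1 + (X : PowerSeries ℤ) ^ i) * geom i) := by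
  classical
  have hsub : ∀ p : Nat.Partition (2 * n), ∀ j ∈ p.parts, j ∈ Finset.Icc 1 (2 * n) := by
    intro p j hj
    rw [Finset.mem_Icc]
    exact ⟨p.parts_pos hj,
      by simpa [p.parts_sum] using Multiset.single_le_sum (fun _ _ => Nat.zero_le _) _ hj⟩
  have step1 : (U n : ℤ) = ∑ p ∈ Finset.univ.filter
      (fun p : Nat.Partition (2 * n) => ∀ j ∈ p.parts, j ∈ Finset.Icc 1 (2 * n)),
        ∏ i ∈ Finset.Icc 1 (2 * n), wfun i (p.parts.count i) := by
    rw [Finset.filter_true_of_mem (fun p _ => hsub p)]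
    rw [U]
    push_cast
    exact Finset.sum_congr rfl fun p _ => (prod_wfun n p (hsub p)).symm
  rw [step1, weightedGF (2 * n) (Finset.Icc 1 (2 * n))
    (fun i hi => (Finset.mem_Icc.mp hi).1) wfun]
  congr 1
  refine Finset.prod_congr rfl fun i hi => ?_
  have hi1 : 0 < i := (Finset.mem_Icc.mp hi).1
  by_cases ho : Odd i
  · rw [if_pos ho, geom_eq_mk _ (by omega)]
    ext m
    rw [coeff_mk, coeff_mk]
    simp only [wfun, if_pos ho]
    by_cases h2 : 2 * i ∣ m
    · obtain ⟨q, rfl⟩ := h2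
      have hdvd : i ∣ 2 * i * q := ⟨2 * q, by ring⟩
      have hq : 2 * i * q / i = 2 * q := by
        rw [show 2 * i * q = i * (2 * q) by ring, Nat.mul_div_cancel_left _ hi1]
      rw [if_pos hdvd, hq, if_pos (even_two_mul q), if_pos ⟨q, rfl⟩]
    · by_cases h1 : i ∣ m
      · obtain ⟨c, rfl⟩ := h1
        rw [if_pos ⟨c, rfl⟩, Nat.mul_div_cancel_left _ hi1, if_neg h2, if_neg]
        intro hc
        obtain ⟨d, rfl⟩ := hc
        exact h2 ⟨d, by ring⟩
      · rw [if_neg h1, if_neg h2]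
  · rw [if_neg ho, evenF_eq i hi1]
    ext m
    rw [coeff_mk, coeff_mk]
    simp only [wfun, if_neg ho]
    by_cases h1 : i ∣ m
    · obtain ⟨c, rfl⟩ := h1
      have hd : i ∣ i * c := ⟨c, rfl⟩
      rw [if_pos hd, if_pos hd, Nat.mul_div_cancel_left _ hi1]
      have : i * c = 0 ↔ c = 0 := by simp [Nat.mul_eq_zero, hi1.ne']
      rw [if_congr this.symm rfl rfl]
    · rw [if_neg h1, if_neg h1]

lemma split_prod (n : ℕ) :
    (∏ i ∈ Finset.Icc 1 (2 * n),
        if Odd i then geom (2 * i) else (1 + (X : PowerSeries ℤ) ^ i) * geom i)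
      = (∏ k ∈ range n, geom (2 * (2 * k + 1))) *
          ∏ k ∈ range n, ((1 + (X : PowerSeries ℤ) ^ (2 * (k + 1))) * geom (2 * (k + 1))) := by
  classical
  rw [← Finset.prod_filter_mul_prod_filter_not (Finset.Icc 1 (2 * n)) (fun i => Odd i)]
  congr 1
  · have hset : (Finset.Icc 1 (2 * n)).filter (fun i => Odd i)
        = (range n).image (fun k => 2 * k + 1) := by
      ext i
      simp only [Finset.mem_filter, Finset.mem_Icc, Finset.mem_image, Finset.mem_range,
        Nat.odd_iff]
      constructor
      · rintro ⟨⟨h1, h2⟩, h3⟩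
        exact ⟨i / 2, by omega, by omega⟩
      · rintro ⟨k, hk, rfl⟩
        omega
    rw [hset, Finset.prod_image (fun a _ b _ h => by omega)]
    refine Finset.prod_congr rfl fun k _ => ?_
    rw [if_pos ⟨k, by ring⟩]
  · have hset : (Finset.Icc 1 (2 * n)).filter (fun i => ¬Odd i)
        = (range n).image (fun k => 2 * (k + 1)) := by
      ext i
      simp only [Finset.mem_filter, Finset.mem_Icc, Finset.mem_image, Finset.mem_range,
        Nat.odd_iff]
      constructor
      · rintro ⟨⟨h1, h2⟩, h3⟩
        exact ⟨i / 2 - 1, by omega, by omega⟩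
      · rintro ⟨k, hk, rfl⟩
        omega
    rw [hset, Finset.prod_image (fun a _ b _ h => by omega)]
    refine Finset.prod_congr rfl fun k _ => ?_
    rw [if_neg (by rw [Nat.odd_iff]; omega)]

/-- `∑_{n≥0} U(n) t^n = ∏_{k≥1} (1+t^k)^2/(1-t^k)` as formal power series over `ℤ`,
stated coefficientwise via stabilized truncations of the infinite product. -/
theorem U_generating_function :
    ∀ n : ℕ,
      (U n : ℤ) =
        PowerSeries.coeff n (∏ k ∈ Finset.range (n + 1),
          (1 + (PowerSeries.X : PowerSeries ℤ) ^ (k + 1)) ^ 2 * geom (k + 1)) := by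
  intro n
  symm
  calc
    coeff n (∏ k ∈ range (n + 1), (1 + (X : PowerSeries ℤ) ^ (k + 1)) ^ 2 * geom (k + 1))
        = coeff n ((∏ k ∈ range (n + 1), (1 + (X : PowerSeries ℤ) ^ (k + 1))) *
            ∏ k ∈ range (n + 1), ((1 + (X : PowerSeries ℤ) ^ (k + 1)) * geom (k + 1))) := by
      rw [← Finset.prod_mul_distrib]
      congr 1
      exact Finset.prod_congr rfl fun k _ => by ring
    _ = coeff n ((∏ k ∈ range (n + 1), geom (2 * k + 1)) *
            ∏ k ∈ range (n + 1), ((1 + (X : PowerSeries ℤ) ^ (k + 1)) * geom (k + 1))) :=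
      coeff_mul_congr_left fun a ha => (same_coeffs (n + 1) a (by omega)).symm
    _ = coeff n (∏ k ∈ range (n + 1),
            (geom (2 * k + 1) * ((1 + (X : PowerSeries ℤ) ^ (k + 1)) * geom (k + 1)))) := by
      conv_rhs => rw [Finset.prod_mul_distrib]
    _ = coeff (2 * n) (DHom (∏ k ∈ range (n + 1),
            (geom (2 * k + 1) * ((1 + (X : PowerSeries ℤ) ^ (k + 1)) * geom (k + 1))))) :=
      (coeff_Dfun_double _ n).symm
    _ = coeff (2 * n) (∏ k ∈ range (n + 1),
            (geom (2 * (2 * k + 1)) *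
              ((1 + (X : PowerSeries ℤ) ^ (2 * (k + 1))) * geom (2 * (k + 1))))) := by
      rw [map_prod]
      congr 1
      refine Finset.prod_congr rfl fun k _ => ?_
      rw [map_mul, map_mul, map_add, map_one, map_pow, DHom_X, ← pow_mul,
        DHom_geom _ (by omega), DHom_geom _ (by omega)]
    _ = coeff (2 * n) ((∏ k ∈ range n,
            (geom (2 * (2 * k + 1)) *
              ((1 + (X : PowerSeries ℤ) ^ (2 * (k + 1))) * geom (2 * (k + 1)))))) := by
      rw [prod_range_succ]
      exact coeff_mul_LO (LO_mul (LO_geom (by omega) (by omega))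
        (LO_mul (LO_one_add_X_pow (by omega)) (LO_geom (by omega) (by omega))))
    _ = coeff (2 * n) ((∏ k ∈ range n, geom (2 * (2 * k + 1))) *
            ∏ k ∈ range n, ((1 + (X : PowerSeries ℤ) ^ (2 * (k + 1))) * geom (2 * (k + 1)))) := by
      conv_lhs => rw [Finset.prod_mul_distrib]
    _ = coeff (2 * n) (∏ i ∈ Finset.Icc 1 (2 * n),
            if Odd i then geom (2 * i) else (1 + (X : PowerSeries ℤ) ^ i) * geom i) := by
      rw [split_prod]
    _ = (U n : ℤ) := (U_coeff n).symm
end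

section
/- Jacobi-type identity: as formal power series, ∑_{k≥0} t^{k(k+1)/2} = ∏_{k≥1} (1+t^k)(1-t^{2k}). -/
/-!
Cauchy's binomial theorem `∏_{j<m} (x + q^(j+1)) = ∑_k e_k(q, …, q^m) x^(m-k)`, taken at `m = 2N`
and `x = q^N`, is the finite Jacobi triple product at `z = 1`:
`q^(N² + T N) ∏_{j<N} (1 + q^j)(1 + q^(j+1)) = ∑_k q^(N(2N-k)) e_k`, where `T k = k(k+1)/2`.
Since `e_k (q;q)_k = q^(T k) (1 - q^(2N)) ⋯ (1 - q^(2N-k+1))`, after multiplying by `(q;q)_(2N)`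
and cancelling `q^(N² + T N)` the terms `k = N + d` and `k = N - 1 - d` become `q^(T d)` times
products of factors `1 - q^e` with `e ≥ N - d`. As `T d ≥ d`, modulo `X^N` the right side is
`2 ∑_{d<N} X^(T d)`, while the left side is `2 ∏_{k=1}^N (1 + X^k)² (1 - X^k)`, twice the
truncated product of the statement; and `2` cancels in `ℤ⟦X⟧`.
-/

open PowerSeries Finset

def triangular (k : ℕ) : ℕ := k * (k + 1) / 2

lemma two_mul_triangular (k : ℕ) : 2 * triangular k = k * (k + 1) :=
  Nat.mul_div_cancel' (Nat.even_mul_succ_self k).two_dvd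

lemma triangular_succ (k : ℕ) : triangular (k + 1) = triangular k + (k + 1) := by
  have h := two_mul_triangular (k + 1)
  have h' := two_mul_triangular k
  nlinarith

lemma le_triangular (k : ℕ) : k ≤ triangular k := by
  have := two_mul_triangular k
  nlinarith

lemma sum_range_add_one_eq_triangular (N : ℕ) : ∑ j ∈ range N, (j + 1) = triangular N := by
  induction N with
  | zero => rfl
  | succ N ih => rw [sum_range_succ, ih, triangular_succ]

lemma mul_sub_add_triangular_add {N d : ℕ} (hd : d ≤ N) :
    N * (2 * N - (N + d)) + triangular (N + d) = N * N + triangular N + triangular d := by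
  obtain ⟨e, rfl⟩ := Nat.exists_eq_add_of_le hd
  rw [show 2 * (d + e) - (d + e + d) = e by omega]
  apply Nat.eq_of_mul_eq_mul_left two_pos
  simp only [mul_add, two_mul_triangular]
  ring

lemma mul_sub_add_triangular_sub {N d : ℕ} (hd : d < N) :
    N * (2 * N - (N - 1 - d)) + triangular (N - 1 - d) = N * N + triangular N + triangular d := by
  obtain ⟨e, rfl⟩ := Nat.exists_eq_add_of_lt hd
  rw [show 2 * (d + e + 1) - (d + e + 1 - 1 - d) = 2 * d + e + 2 by omega,
    show d + e + 1 - 1 - d = e by omega]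
  apply Nat.eq_of_mul_eq_mul_left two_pos
  simp only [mul_add, two_mul_triangular]
  ring

section QAnalogues

variable {R : Type*} [CommRing R] (q : R)

def qPochhammer (a n : ℕ) : R := ∏ j ∈ range n, (1 - q ^ (a + j))

-- For `k > m` the factor `1 - q ^ (m - m) = 0` makes it vanish.
def qDescPochhammer (m k : ℕ) : R := ∏ j ∈ range k, (1 - q ^ (m - j))

-- `e_k(q, q², …, q^m) = q^(k(k+1)/2) [m choose k]_q`
def esymmPowers (m k : ℕ) : R := ((Multiset.range m).map fun j => q ^ (j + 1)).esymm k

lemma qPochhammer_add (a b c : ℕ) :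
    qPochhammer q a (b + c) = qPochhammer q a b * qPochhammer q (a + b) c := by
  simp only [qPochhammer, prod_range_add, add_assoc]

lemma esymmPowers_zero_right (m : ℕ) : esymmPowers q m 0 = 1 := by
  simp [esymmPowers, Multiset.esymm]

lemma esymmPowers_zero_succ (k : ℕ) : esymmPowers q 0 (k + 1) = 0 := by
  simp [esymmPowers, Multiset.esymm, Multiset.powersetCard_zero_right]

lemma esymmPowers_succ_succ (m k : ℕ) :
    esymmPowers q (m + 1) (k + 1) = esymmPowers q m (k + 1) + q ^ (m + 1) * esymmPowers q m k := by
  simp [esymmPowers, Multiset.esymm, Multiset.range_succ, Multiset.powersetCard_cons,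
    Multiset.sum_map_mul_left]

lemma prod_add_pow_eq_sum_esymmPowers (x : R) (m : ℕ) :
    ∏ j ∈ range m, (x + q ^ (j + 1)) = ∑ k ∈ range (m + 1), esymmPowers q m k * x ^ (m - k) := by
  have := congrArg (Polynomial.eval x)
    (Multiset.prod_X_add_C_eq_sum_esymm ((Multiset.range m).map fun j => q ^ (j + 1)))
  simpa [Polynomial.eval_multiset_prod, Polynomial.eval_finsetSum, esymmPowers,
    Finset.prod_eq_multiset_prod] using this


lemma esymmPowers_mul_qPochhammer (m k : ℕ) :
    esymmPowers q m k * qPochhammer q 1 k = q ^ triangular k * qDescPochhammer q m k := by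
  induction m generalizing k with
  | zero =>
    cases k with
    | zero => simp [esymmPowers_zero_right, qPochhammer, qDescPochhammer, triangular]
    | succ k => simp [esymmPowers_zero_succ, qDescPochhammer]
  | succ m ih =>
    cases k with
    | zero => simp [esymmPowers_zero_right, qPochhammer, qDescPochhammer, triangular]
    | succ k =>
      have hsucc : qPochhammer q 1 (k + 1) = qPochhammer q 1 k * (1 - q ^ (k + 1)) := by
        rw [qPochhammer, qPochhammer, prod_range_succ, add_comm 1 k]
      have hdesc : qDescPochhammer q (m + 1) (k + 1) = (1 - q ^ (m + 1)) * qDescPochhammer q m k := by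
        simp [qDescPochhammer, prod_range_succ', mul_comm]
      have hdesc' : qDescPochhammer q m (k + 1) = qDescPochhammer q m k * (1 - q ^ (m - k)) :=
        prod_range_succ _ _
      rcases le_or_gt k m with hkm | hmk
      · have hexp : q ^ (k + 1) * q ^ (m - k) = q ^ (m + 1) := by
          rw [← pow_add]; congr 1; omega
        rw [esymmPowers_succ_succ, add_mul, ih, mul_assoc, hsucc, ← mul_assoc _ (qPochhammer q 1 k),
          ih, hdesc, hdesc', triangular_succ, pow_add]
        linear_combination -(q ^ triangular k * qDescPochhammer q m k) * hexp
      · have hzero : qDescPochhammer q m k = 0 :=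
          prod_eq_zero (mem_range.2 hmk) (by simp)
        rw [esymmPowers_succ_succ, add_mul, ih, mul_assoc, hsucc, ← mul_assoc _ (qPochhammer q 1 k),
          ih, hdesc, hdesc', hzero]
        ring


-- `[m choose k]_q (q;q)_m`
def qBinomialPoch (m k : ℕ) : R := qDescPochhammer q m k * qPochhammer q (k + 1) (m - k)

lemma esymmPowers_mul_qPochhammer_eq {m k : ℕ} (hk : k ≤ m) :
    esymmPowers q m k * qPochhammer q 1 m = q ^ triangular k * qBinomialPoch q m k := by
  obtain ⟨d, rfl⟩ := Nat.exists_eq_add_of_le hk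
  rw [qPochhammer_add, ← mul_assoc, esymmPowers_mul_qPochhammer, qBinomialPoch,
    Nat.add_sub_cancel_left, add_comm 1 k, mul_assoc]

lemma prod_pow_add_pow (N : ℕ) :
    ∏ j ∈ range (2 * N), (q ^ N + q ^ (j + 1)) =
      q ^ (N * N + triangular N) *
        ((∏ j ∈ range N, (1 + q ^ j)) * ∏ j ∈ range N, (1 + q ^ (j + 1))) := by
  have hlow : ∏ j ∈ range N, (q ^ N + q ^ (j + 1)) =
      q ^ triangular N * ∏ j ∈ range N, (1 + q ^ j) := by
    rw [← prod_range_reflect (fun j => 1 + q ^ j), ← sum_range_add_one_eq_triangular, ← prod_pow_eq_pow_sum,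
      ← prod_mul_distrib]
    refine prod_congr rfl fun j hj => ?_
    rw [mul_add, mul_one, ← pow_add, add_comm]
    congr 2
    have := mem_range.1 hj
    omega
  have hhigh : ∏ j ∈ range N, (q ^ N + q ^ (N + j + 1)) =
      q ^ (N * N) * ∏ j ∈ range N, (1 + q ^ (j + 1)) := by
    rw [show q ^ (N * N) = ∏ _j ∈ range N, q ^ N by rw [prod_const, card_range, pow_mul],
      ← prod_mul_distrib]
    exact prod_congr rfl fun j _ => by ring
  rw [two_mul, prod_range_add, hlow, hhigh]
  ring

lemma prod_pow_add_pow_mul_qPochhammer (N : ℕ) :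
    (∏ j ∈ range (2 * N), (q ^ N + q ^ (j + 1))) * qPochhammer q 1 (2 * N) =
      q ^ (N * N + triangular N) *
        (∑ d ∈ range N, q ^ triangular d * qBinomialPoch q (2 * N) (N - 1 - d) +
          ∑ d ∈ range (N + 1), q ^ triangular d * qBinomialPoch q (2 * N) (N + d)) := by
  have hterm : ∀ k ≤ 2 * N, esymmPowers q (2 * N) k * (q ^ N) ^ (2 * N - k) *
      qPochhammer q 1 (2 * N) = q ^ (N * (2 * N - k) + triangular k) * qBinomialPoch q (2 * N) k := by
    intro k hk
    rw [mul_right_comm, esymmPowers_mul_qPochhammer_eq q hk, ← pow_mul, pow_add]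
    ring
  rw [prod_add_pow_eq_sum_esymmPowers, sum_mul, show 2 * N + 1 = N + (N + 1) by ring, sum_range_add,
    ← sum_range_reflect _ N, mul_add, mul_sum, mul_sum]
  congr 1 <;> refine sum_congr rfl fun d hd => ?_ <;> have hd := mem_range.1 hd
  · rw [hterm _ (by omega), mul_sub_add_triangular_sub hd, pow_add]
    ring
  · rw [hterm _ (by omega), mul_sub_add_triangular_add (by omega), pow_add]
    ring

end QAnalogues

section Congruences

variable {A : Type*} [CommRing A] (a : A)

lemma pow_smodEq_zero {c e : ℕ} (h : c ≤ e) : a ^ e ≡ 0 [SMOD Ideal.span {a ^ c}] :=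
  SModEq.zero.2 (Ideal.mem_span_singleton.2 (pow_dvd_pow a h))

lemma prod_one_sub_pow_smodEq_one {ι : Type*} {s : Finset ι} {c : ℕ} {e : ι → ℕ}
    (h : ∀ i ∈ s, c ≤ e i) : ∏ i ∈ s, (1 - a ^ e i) ≡ 1 [SMOD Ideal.span {a ^ c}] := by
  simpa using SModEq.prod fun i hi => (SModEq.refl 1).sub (pow_smodEq_zero a (h i hi))

lemma pow_mul_smodEq_pow_mul {x y : A} {c t : ℕ} (h : x ≡ y [SMOD Ideal.span {a ^ (c - t)}]) :
    a ^ t * x ≡ a ^ t * y [SMOD Ideal.span {a ^ c}] := by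
  rw [SModEq.sub_mem, Ideal.mem_span_singleton] at h ⊢
  rw [← mul_sub]
  calc a ^ c ∣ a ^ (t + (c - t)) := pow_dvd_pow a (by omega)
    _ ∣ a ^ t * (x - y) := by rw [pow_add]; exact mul_dvd_mul_left _ h

lemma qBinomialPoch_smodEq_one {m k c : ℕ} (hk : k ≤ m) (h₁ : c ≤ k + 1) (h₂ : c ≤ m - k + 1) :
    qBinomialPoch a m k ≡ 1 [SMOD Ideal.span {a ^ c}] := by
  have hdesc : qDescPochhammer a m k ≡ 1 [SMOD Ideal.span {a ^ c}] :=
    prod_one_sub_pow_smodEq_one a fun j hj => by have := mem_range.1 hj; omega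
  have hpoch : qPochhammer a (k + 1) (m - k) ≡ 1 [SMOD Ideal.span {a ^ c}] :=
    prod_one_sub_pow_smodEq_one a fun j _ => by omega
  unfold qBinomialPoch
  simpa using hdesc.mul hpoch

lemma pow_triangular_mul_qBinomialPoch_smodEq {m k c d : ℕ} (hk : k ≤ m) (h₁ : c ≤ d + k + 1)
    (h₂ : c ≤ d + (m - k) + 1) :
    a ^ triangular d * qBinomialPoch a m k ≡ a ^ triangular d [SMOD Ideal.span {a ^ c}] := by
  have := le_triangular d
  simpa using pow_mul_smodEq_pow_mul a (qBinomialPoch_smodEq_one a hk (c := c - triangular d)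
    (by omega) (by omega))

end Congruences

section PowerSeries

variable {R : Type*} [CommRing R]

lemma prod_one_add_X_pow_mul_qPochhammer (N : ℕ) :
    ((∏ j ∈ range N, (1 + (X : R⟦X⟧) ^ j)) * ∏ j ∈ range N, (1 + (X : R⟦X⟧) ^ (j + 1))) *
        qPochhammer (X : R⟦X⟧) 1 (2 * N) =
      ∑ d ∈ range N, X ^ triangular d * qBinomialPoch X (2 * N) (N - 1 - d) +
        ∑ d ∈ range (N + 1), X ^ triangular d * qBinomialPoch X (2 * N) (N + d) :=
  X_pow_mul_cancel (k := N * N + triangular N) <| by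
    rw [← mul_assoc, ← prod_pow_add_pow, prod_pow_add_pow_mul_qPochhammer]

theorem two_mul_prod_smodEq_two_mul_sum (n : ℕ) :
    2 * ∏ k ∈ range (n + 1), (1 + (X : R⟦X⟧) ^ (k + 1)) * (1 - X ^ (2 * (k + 1))) ≡
      2 * ∑ k ∈ range (n + 1), (X : R⟦X⟧) ^ triangular k
      [SMOD Ideal.span {(X : R⟦X⟧) ^ (n + 1)}] := by
  set N := n + 1
  set P := ∏ j ∈ range N, (1 + (X : R⟦X⟧) ^ (j + 1))
  have hprod : ∏ k ∈ range N, (1 + (X : R⟦X⟧) ^ (k + 1)) * (1 - X ^ (2 * (k + 1))) =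
      P ^ 2 * qPochhammer X 1 N := by
    rw [← prod_pow, qPochhammer, ← prod_mul_distrib]
    exact prod_congr rfl fun k _ => by ring
  have hP : 2 * P ≡ ∏ j ∈ range N, (1 + (X : R⟦X⟧) ^ j) [SMOD Ideal.span {(X : R⟦X⟧) ^ N}] :=
    calc 2 * P = 2 * (∏ j ∈ range n, (1 + X ^ (j + 1))) * (1 + X ^ N) := by
          rw [show P = _ from prod_range_succ _ n, mul_assoc]
      _ ≡ 2 * (∏ j ∈ range n, (1 + X ^ (j + 1))) * (1 + 0) [SMOD Ideal.span {(X : R⟦X⟧) ^ N}] :=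
          (SModEq.refl _).mul ((SModEq.refl 1).add (pow_smodEq_zero X le_rfl))
      _ = ∏ j ∈ range N, (1 + X ^ j) := by
          rw [prod_range_succ']
          ring
  have hpoch : qPochhammer (X : R⟦X⟧) 1 N ≡ qPochhammer X 1 (2 * N)
      [SMOD Ideal.span {(X : R⟦X⟧) ^ N}] :=
    calc qPochhammer (X : R⟦X⟧) 1 N = qPochhammer X 1 N * 1 := (mul_one _).symm
      _ ≡ qPochhammer X 1 N * qPochhammer X (1 + N) N [SMOD Ideal.span {(X : R⟦X⟧) ^ N}] :=
          (SModEq.refl _).mul (prod_one_sub_pow_smodEq_one X fun j _ => by omega).symm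
      _ = qPochhammer X 1 (2 * N) := by rw [← qPochhammer_add, two_mul]
  calc 2 * ∏ k ∈ range N, (1 + (X : R⟦X⟧) ^ (k + 1)) * (1 - X ^ (2 * (k + 1)))
        = 2 * P * P * qPochhammer X 1 N := by rw [hprod]; ring
    _ ≡ (∏ j ∈ range N, (1 + X ^ j)) * P * qPochhammer X 1 (2 * N)
        [SMOD Ideal.span {(X : R⟦X⟧) ^ N}] := (hP.mul (SModEq.refl P)).mul hpoch
    _ = ∑ d ∈ range N, X ^ triangular d * qBinomialPoch X (2 * N) (N - 1 - d) +
        ∑ d ∈ range (N + 1), X ^ triangular d * qBinomialPoch X (2 * N) (N + d) :=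
          prod_one_add_X_pow_mul_qPochhammer N
    _ ≡ ∑ d ∈ range N, X ^ triangular d + ∑ d ∈ range (N + 1), X ^ triangular d
        [SMOD Ideal.span {(X : R⟦X⟧) ^ N}] := by
          refine (SModEq.sum fun d hd => ?_).add (SModEq.sum fun d hd => ?_) <;>
            have := mem_range.1 hd <;>
            exact pow_triangular_mul_qBinomialPoch_smodEq X (by omega) (by omega) (by omega)
    _ = 2 * ∑ k ∈ range N, X ^ triangular k + X ^ triangular N := by
          rw [sum_range_succ _ N]
          ring
    _ ≡ 2 * ∑ k ∈ range N, X ^ triangular k + 0 [SMOD Ideal.span {(X : R⟦X⟧) ^ N}] :=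
          (SModEq.refl _).add (pow_smodEq_zero X (le_triangular N))
    _ = 2 * ∑ k ∈ range N, X ^ triangular k := add_zero _

lemma smodEq_of_two_mul_smodEq [IsDomain R] [NeZero (2 : R)] {f g : R⟦X⟧} {c : ℕ}
    (h : 2 * f ≡ 2 * g [SMOD Ideal.span {(X : R⟦X⟧) ^ c}]) :
    f ≡ g [SMOD Ideal.span {(X : R⟦X⟧) ^ c}] := by
  rw [SModEq.sub_mem, Ideal.mem_span_singleton, ← mul_sub] at h
  rw [SModEq.sub_mem, Ideal.mem_span_singleton]
  refine X_prime.pow_dvd_of_dvd_mul_left c ?_ h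
  rw [X_dvd_iff, map_ofNat]
  exact two_ne_zero

lemma coeff_eq_of_smodEq {f g : R⟦X⟧} {n : ℕ}
    (h : f ≡ g [SMOD Ideal.span {(X : R⟦X⟧) ^ (n + 1)}]) : coeff n f = coeff n g := by
  rw [SModEq.sub_mem, Ideal.mem_span_singleton, X_pow_dvd_iff] at h
  simpa [sub_eq_zero] using h n (lt_add_one n)

end PowerSeries

/-- Jacobi-type identity: as formal power series over `ℤ`,
`∑_{k≥0} t^{k(k+1)/2} = ∏_{k≥1} (1+t^k)(1-t^{2k})`, stated coefficientwise:
the `n`-th coefficient of the (stabilized) truncations agree. -/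
theorem jacobi_triangular_identity :
    ∀ n : ℕ,
      PowerSeries.coeff (R := ℤ) n (∑ k ∈ Finset.range (n + 1), (PowerSeries.X : PowerSeries ℤ) ^ (k * (k + 1) / 2)) =
      PowerSeries.coeff (R := ℤ) n (∏ k ∈ Finset.range (n + 1),
        (1 + (PowerSeries.X : PowerSeries ℤ) ^ (k + 1)) * (1 - (PowerSeries.X : PowerSeries ℤ) ^ (2 * (k + 1)))) :=
  fun n => (coeff_eq_of_smodEq (smodEq_of_two_mul_smodEq (two_mul_prod_smodEq_two_mul_sum n))).symm
end

section
/- As formal power series, ∑_{k≥0} t^{k(k+1)} = ∏_{k≥1} (1+t^{2k})(1-t^{4k}). -/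
/-!
Put `q = X²`. The finite Jacobi triple product at `z = 1`,
`∏_{k<N} (1 + q^(k+1)) (1 + q^k) = ∑_{i ≤ 2N} [2N, i]_q q^((i-N)(i-N+1)/2)`,
follows by comparing coefficients in `z` of `∏_{k<N} (1 + z q^(k+1)) (z + q^k)`.
Since `[2N, i]_q (q;q)_N ≡ 1` modulo `q^(min(i, 2N-i)+1)`, multiplying by `(q;q)_N` leaves,
below degree `N`, the sum `∑_{i ≤ 2N} X^((i-N)(i-N+1))`, in which every `X^(k(k+1))` with
`k < N` occurs twice (at `i = N + k` and `i = N - 1 - k`). On the product side the factor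
`1 + q^0 = 2` accounts for this doubling: `2 ∏_{k<N} (1 + q^(k+1)) (1 - q^(2(k+1)))` is
`(1 + q^N) ∏_{k<N} (1 + q^(k+1)) (1 + q^k) · (q;q)_N`. So the two sides of the identity agree
below degree `N` after multiplication by `2`, and `ℤ` has no `2`-torsion.
-/

open PowerSeries Finset

namespace GaussTheta

variable {R : Type*} [CommRing R]

-- `(q;q)_m` and the Gaussian binomial `[m, s]_q`, both at `q = X²`.
noncomputable def qPochhammer (m : ℕ) : R⟦X⟧ := ∏ k ∈ range m, (1 - X ^ (2 * (k + 1)))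

noncomputable def qBinom : ℕ → ℕ → R⟦X⟧
  | _, 0 => 1
  | 0, _ + 1 => 0
  | m + 1, s + 1 => qBinom m s + X ^ (2 * (s + 1)) * qBinom m (s + 1)

@[simp]
lemma qBinom_zero_right (m : ℕ) : (qBinom m 0 : R⟦X⟧) = 1 := by
  cases m <;> rfl

lemma qBinom_succ_succ (m s : ℕ) :
    (qBinom (m + 1) (s + 1) : R⟦X⟧) = qBinom m s + X ^ (2 * (s + 1)) * qBinom m (s + 1) := rfl

lemma qBinom_eq_zero_of_lt : ∀ {m s : ℕ}, m < s → (qBinom m s : R⟦X⟧) = 0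
  | 0, _ + 1, _ => rfl
  | m + 1, s + 1, h => by
    rw [qBinom_succ_succ, qBinom_eq_zero_of_lt (by omega), qBinom_eq_zero_of_lt (by omega)]
    simp

@[simp]
lemma qBinom_self (m : ℕ) : (qBinom m m : R⟦X⟧) = 1 := by
  induction m with
  | zero => rfl
  | succ m ih => rw [qBinom_succ_succ, ih, qBinom_eq_zero_of_lt (by omega), mul_zero, add_zero]

lemma qPochhammer_succ (m : ℕ) :
    (qPochhammer (m + 1) : R⟦X⟧) = qPochhammer m * (1 - X ^ (2 * (m + 1))) :=
  prod_range_succ _ _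

lemma isUnit_qPochhammer (m : ℕ) : IsUnit (qPochhammer m : R⟦X⟧) := by
  simp [isUnit_iff_constantCoeff, qPochhammer]

lemma qBinom_add_mul_qPochhammer_mul_qPochhammer (a b : ℕ) :
    (qBinom (a + b) a * qPochhammer a * qPochhammer b : R⟦X⟧) = qPochhammer (a + b) := by
  induction a generalizing b with
  | zero => simp [qPochhammer]
  | succ a iha =>
    induction b with
    | zero => simp [qPochhammer]
    | succ b ihb =>
      have h₁ := iha (b + 1)
      rw [← add_assoc, qPochhammer_succ b] at h₁
      rw [add_right_comm, qPochhammer_succ a] at ihb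
      rw [show a + 1 + (b + 1) = a + b + 1 + 1 by omega, qBinom_succ_succ,
        qPochhammer_succ (a + b + 1), qPochhammer_succ a, qPochhammer_succ b]
      linear_combination (1 - X ^ (2 * (a + 1))) * h₁ +
        X ^ (2 * (a + 1)) * (1 - X ^ (2 * (b + 1))) * ihb

lemma qBinom_mul_qPochhammer_mul_qPochhammer {m s : ℕ} (h : s ≤ m) :
    (qBinom m s * qPochhammer s * qPochhammer (m - s) : R⟦X⟧) = qPochhammer m := by
  obtain ⟨t, rfl⟩ := Nat.exists_eq_add_of_le h
  rw [Nat.add_sub_cancel_left, qBinom_add_mul_qPochhammer_mul_qPochhammer]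

lemma qBinom_succ_succ' (m s : ℕ) :
    (qBinom (m + 1) (s + 1) : R⟦X⟧) = X ^ (2 * (m - s)) * qBinom m s + qBinom m (s + 1) := by
  rcases lt_trichotomy s m with hlt | rfl | hgt
  · obtain ⟨b, rfl⟩ : ∃ b, m = s + b + 1 := ⟨m - s - 1, by omega⟩
    rw [← ((isUnit_qPochhammer (s + 1)).mul (isUnit_qPochhammer (b + 1))).mul_left_inj]
    have h₀ := qBinom_add_mul_qPochhammer_mul_qPochhammer (R := R) (s + 1) (b + 1)
    have h₁ := qBinom_add_mul_qPochhammer_mul_qPochhammer (R := R) s (b + 1)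
    have h₂ := qBinom_add_mul_qPochhammer_mul_qPochhammer (R := R) (s + 1) b
    rw [show s + 1 + (b + 1) = s + b + 1 + 1 by omega, qPochhammer_succ (s + b + 1),
      qPochhammer_succ s, qPochhammer_succ b] at h₀
    rw [← add_assoc, qPochhammer_succ b] at h₁
    rw [add_right_comm, qPochhammer_succ s] at h₂
    rw [show s + b + 1 - s = b + 1 by omega, qPochhammer_succ s, qPochhammer_succ b]
    linear_combination h₀ - X ^ (2 * (b + 1)) * (1 - X ^ (2 * (s + 1))) * h₁
      - (1 - X ^ (2 * (b + 1))) * h₂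
  · simp [qBinom_eq_zero_of_lt]
  · simp [qBinom_eq_zero_of_lt, hgt, Nat.lt_succ_of_lt hgt]

lemma qBinom_add_two_add_two (m s : ℕ) :
    (qBinom (m + 2) (s + 2) : R⟦X⟧) = X ^ (2 * (m - s)) * qBinom m s
      + (1 + X ^ (2 * (m + 1))) * qBinom m (s + 1) + X ^ (2 * (s + 2)) * qBinom m (s + 2) := by
  rw [qBinom_succ_succ, qBinom_succ_succ', qBinom_succ_succ']
  have h : (X : R⟦X⟧) ^ (2 * (s + 2)) * X ^ (2 * (m - (s + 1))) * qBinom m (s + 1)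
      = X ^ (2 * (m + 1)) * qBinom m (s + 1) := by
    rcases le_or_gt (s + 1) m with hle | hgt
    · rw [← pow_add]; congr 2; omega
    · simp [qBinom_eq_zero_of_lt hgt]
  linear_combination h

lemma qBinom_add_two_one (m : ℕ) :
    (qBinom (m + 2) 1 : R⟦X⟧) = 1 + X ^ (2 * (m + 1)) + X ^ 2 * qBinom m 1 := by
  rw [qBinom_succ_succ, qBinom_succ_succ']
  simp only [qBinom_zero_right, Nat.sub_zero]
  ring

def jacobiExponent (n i : ℕ) : ℕ := (((i : ℤ) - n) * ((i : ℤ) - n + 1)).toNat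

lemma cast_jacobiExponent (n i : ℕ) :
    (jacobiExponent n i : ℤ) = ((i : ℤ) - n) * ((i : ℤ) - n + 1) :=
  Int.toNat_of_nonneg <| by rcases le_or_gt (n : ℤ) i with h | h <;> nlinarith

noncomputable def jacobiPoly (n : ℕ) : Polynomial R⟦X⟧ :=
  ∏ k ∈ range n,
    (1 + Polynomial.C (X ^ (2 * (k + 1))) * Polynomial.X)
      * (Polynomial.X + Polynomial.C (X ^ (2 * k)))

lemma jacobiPoly_succ (n : ℕ) :
    (jacobiPoly (n + 1) : Polynomial R⟦X⟧) = jacobiPoly n * Polynomial.C (X ^ (2 * n))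
      + jacobiPoly n * Polynomial.C (1 + X ^ (2 * (n + 1)) * X ^ (2 * n)) * Polynomial.X
      + jacobiPoly n * Polynomial.C (X ^ (2 * (n + 1))) * Polynomial.X ^ 2 := by
  rw [jacobiPoly, prod_range_succ, ← jacobiPoly]
  simp only [map_add, map_mul, map_one]
  ring

lemma coeff_jacobiPoly (n i : ℕ) :
    (jacobiPoly n : Polynomial R⟦X⟧).coeff i = qBinom (2 * n) i * X ^ jacobiExponent n i := by
  induction n generalizing i with
  | zero =>
    rcases i with _ | i
    · simp [jacobiPoly, jacobiExponent]
    · simp [jacobiPoly, qBinom_eq_zero_of_lt, Polynomial.coeff_one]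
  | succ n ih =>
    rw [jacobiPoly_succ]
    rcases i with _ | _ | i
    · simp only [Polynomial.coeff_add, Polynomial.coeff_mul_C, Polynomial.coeff_mul_X_zero,
        Polynomial.coeff_mul_X_pow', ih]
      have h : jacobiExponent n 0 + 2 * n = jacobiExponent (n + 1) 0 := by
        zify [cast_jacobiExponent]; ring
      simp [← pow_add, h]
    · simp only [Polynomial.coeff_add, Polynomial.coeff_mul_C, Polynomial.coeff_mul_X,
        Polynomial.coeff_mul_X_pow', ih, if_neg (show ¬2 ≤ 0 + 1 by omega)]
      have h₀ : (X : R⟦X⟧) ^ jacobiExponent n 1 * X ^ (2 * n)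
          = X ^ 2 * X ^ jacobiExponent n 0 := by
        rw [← pow_add, ← pow_add]; congr 1; zify [cast_jacobiExponent]; ring
      have h₁ : jacobiExponent (n + 1) 1 = jacobiExponent n 0 := by
        zify [cast_jacobiExponent]; ring
      rw [Nat.mul_succ, qBinom_add_two_one, zero_add, h₁, qBinom_zero_right]
      linear_combination qBinom (2 * n) 1 * h₀
    · simp only [Polynomial.coeff_add, Polynomial.coeff_mul_C, Polynomial.coeff_mul_X,
        Polynomial.coeff_mul_X_pow, ih]
      have h₀ : qBinom (2 * n) i * (X : R⟦X⟧) ^ jacobiExponent n i * X ^ (2 * (n + 1))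
          = qBinom (2 * n) i * X ^ (2 * (2 * n - i)) * X ^ jacobiExponent n (i + 1) := by
        rcases le_or_gt i (2 * n) with hi | hi
        · rw [mul_assoc, mul_assoc, ← pow_add, ← pow_add]
          congr 2
          zify [cast_jacobiExponent, hi]; ring
        · simp [qBinom_eq_zero_of_lt hi]
      have h₂ : (X : R⟦X⟧) ^ jacobiExponent n (i + 2) * X ^ (2 * n)
          = X ^ (2 * (i + 2)) * X ^ jacobiExponent n (i + 1) := by
        rw [← pow_add, ← pow_add]; congr 1; zify [cast_jacobiExponent]; ring
      have h₃ : jacobiExponent (n + 1) (i + 2) = jacobiExponent n (i + 1) := by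
        zify [cast_jacobiExponent]; ring
      rw [Nat.mul_succ, qBinom_add_two_add_two, h₃]
      linear_combination h₀ + qBinom (2 * n) (i + 2) * h₂

theorem prod_one_add_X_pow_mul_one_add_X_pow_eq_sum (n : ℕ) :
    ∏ k ∈ range n, ((1 + X ^ (2 * (k + 1))) * (1 + X ^ (2 * k)) : R⟦X⟧)
      = ∑ i ∈ range (2 * n + 1), qBinom (2 * n) i * X ^ jacobiExponent n i := by
  have hdeg : (jacobiPoly n : Polynomial R⟦X⟧).natDegree < 2 * n + 1 := by
    refine Nat.lt_succ_of_le (Polynomial.natDegree_le_iff_coeff_eq_zero.mpr fun i hi => ?_)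
    rw [coeff_jacobiPoly, qBinom_eq_zero_of_lt hi, zero_mul]
  have heval : (jacobiPoly n : Polynomial R⟦X⟧).eval 1
      = ∏ k ∈ range n, ((1 + X ^ (2 * (k + 1))) * (1 + X ^ (2 * k)) : R⟦X⟧) := by
    simp [jacobiPoly, Polynomial.eval_prod]
  rw [← heval, Polynomial.eval_eq_sum_range' hdeg]
  simp [coeff_jacobiPoly]

lemma X_pow_dvd_qPochhammer_sub_qPochhammer {a m : ℕ} (h : a ≤ m) :
    (X : R⟦X⟧) ^ (2 * (a + 1)) ∣ qPochhammer m - qPochhammer a := by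
  induction m, h using Nat.le_induction with
  | base => simp
  | succ m ham ih =>
    have h : qPochhammer (m + 1) - qPochhammer a
        = (qPochhammer m - qPochhammer a) - X ^ (2 * (m + 1)) * (qPochhammer m : R⟦X⟧) := by
      rw [qPochhammer_succ]; ring
    rw [h]
    exact dvd_sub ih (Dvd.dvd.mul_right (pow_dvd_pow _ (by omega)) _)

lemma X_pow_dvd_qBinom_mul_qPochhammer_sub_one {m s a c : ℕ} (hsm : s ≤ m) (has : a ≤ s)
    (hams : a ≤ m - s) (hac : a ≤ c) :
    (X : R⟦X⟧) ^ (2 * (a + 1)) ∣ qBinom m s * qPochhammer c - 1 := by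
  -- Modulo `q^(a+1)` every `(q;q)_k` with `k ≥ a` equals `(q;q)_a`, so that
  -- `[m, s]_q (q;q)_s (q;q)_(m-s) = (q;q)_m` becomes `[m, s]_q (q;q)_a² = (q;q)_a`.
  set π := Ideal.Quotient.mk (Ideal.span {(X : R⟦X⟧) ^ (2 * (a + 1))})
  have hP : ∀ k, a ≤ k → π (qPochhammer k) = π (qPochhammer a) := fun k hk =>
    Ideal.Quotient.eq.mpr (Ideal.mem_span_singleton.mpr (X_pow_dvd_qPochhammer_sub_qPochhammer hk))
  have hB := congrArg π (qBinom_mul_qPochhammer_mul_qPochhammer (R := R) hsm)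
  simp only [map_mul, hP _ has, hP _ hams, hP _ (has.trans hsm)] at hB
  rw [← Ideal.mem_span_singleton, ← Ideal.Quotient.eq_zero_iff_mem, map_sub, map_mul, hP c hac,
    map_one, sub_eq_zero]
  exact ((isUnit_qPochhammer a).map π).mul_left_cancel (by linear_combination hB)

lemma le_jacobiExponent_add {N i : ℕ} (hi : i ≤ 2 * N) :
    N ≤ jacobiExponent N i + 2 * (min i (2 * N - i) + 1) := by
  zify [cast_jacobiExponent]
  rcases le_total i N with h | h
  · rw [min_eq_left (by omega)]; nlinarith [sq_nonneg ((N : ℤ) - i - 1)]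
  · rw [min_eq_right (by omega)]; push_cast [hi]; nlinarith

lemma sum_range_X_pow_jacobiExponent (N : ℕ) :
    ∑ i ∈ range (2 * N + 1), (X : R⟦X⟧) ^ jacobiExponent N i
      = 2 * ∑ k ∈ range N, X ^ (k * (k + 1)) + X ^ (N * (N + 1)) := by
  have hlow : ∀ k ∈ range N, jacobiExponent N (N - 1 - k) = k * (k + 1) := fun k hk => by
    have := mem_range.mp hk
    zify [cast_jacobiExponent, show k ≤ N - 1 by omega, show 1 ≤ N by omega]; ring
  have hhigh : ∀ k, jacobiExponent N (N + k) = k * (k + 1) := fun k => by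
    zify [cast_jacobiExponent]; ring
  rw [show 2 * N + 1 = N + (N + 1) by ring, sum_range_add, ← sum_range_reflect, sum_range_succ]
  simp only [sum_congr rfl fun k hk => congrArg (X ^ ·) (hlow k hk), hhigh]
  ring

lemma X_pow_dvd_sum_qBinom_mul_qPochhammer_sub (N : ℕ) :
    (X : R⟦X⟧) ^ N ∣ (∑ i ∈ range (2 * N + 1), qBinom (2 * N) i * X ^ jacobiExponent N i)
      * qPochhammer N - ∑ i ∈ range (2 * N + 1), X ^ jacobiExponent N i := by
  rw [sum_mul, ← sum_sub_distrib]
  refine dvd_sum fun i hi => ?_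
  have hi : i ≤ 2 * N := Nat.lt_succ_iff.mp (mem_range.mp hi)
  have hB := X_pow_dvd_qBinom_mul_qPochhammer_sub_one (R := R) (c := N) hi (min_le_left _ _)
    (min_le_right _ _) (by omega)
  rw [show qBinom (2 * N) i * X ^ jacobiExponent N i * qPochhammer N - X ^ jacobiExponent N i
    = (qBinom (2 * N) i * qPochhammer N - 1) * (X : R⟦X⟧) ^ jacobiExponent N i by ring]
  refine (pow_dvd_pow X (le_jacobiExponent_add hi)).trans ?_
  rw [pow_add, mul_comm]
  exact mul_dvd_mul hB dvd_rfl

lemma two_mul_prod_eq_mul_prod_mul_qPochhammer (N : ℕ) :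
    2 * ∏ k ∈ range N, ((1 + X ^ (2 * (k + 1))) * (1 - X ^ (4 * (k + 1))) : R⟦X⟧)
      = (1 + X ^ (2 * N)) * (∏ k ∈ range N, (1 + X ^ (2 * (k + 1))) * (1 + X ^ (2 * k)))
        * qPochhammer N := by
  have hfac : ∀ k ∈ range N, ((1 + X ^ (2 * (k + 1))) * (1 - X ^ (4 * (k + 1))) : R⟦X⟧)
      = (1 + X ^ (2 * (k + 1))) * (1 + X ^ (2 * (k + 1))) * (1 - X ^ (2 * (k + 1))) :=
    fun k _ => by ring
  have hshift : (∏ k ∈ range N, (1 + X ^ (2 * k) : R⟦X⟧)) * (1 + X ^ (2 * N))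
      = 2 * ∏ k ∈ range N, (1 + X ^ (2 * (k + 1))) := by
    rw [← prod_range_succ (fun k => (1 + X ^ (2 * k) : R⟦X⟧)), prod_range_succ']
    norm_num [mul_comm]
  rw [prod_congr rfl hfac, prod_mul_distrib, prod_mul_distrib, prod_mul_distrib]
  unfold qPochhammer
  linear_combination -(∏ k ∈ range N, (1 + X ^ (2 * (k + 1)) : R⟦X⟧))
    * (∏ k ∈ range N, (1 - X ^ (2 * (k + 1)))) * hshift

lemma X_pow_dvd_two_mul_prod_sub_sum (N : ℕ) :
    (X : R⟦X⟧) ^ N ∣ 2 * (∏ k ∈ range N, (1 + X ^ (2 * (k + 1))) * (1 - X ^ (4 * (k + 1)))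
      - ∑ k ∈ range N, X ^ (k * (k + 1))) := by
  have hS := sum_range_X_pow_jacobiExponent (R := R) N
  set T := ∑ i ∈ range (2 * N + 1), qBinom (2 * N) i * (X : R⟦X⟧) ^ jacobiExponent N i
  set S := ∑ i ∈ range (2 * N + 1), (X : R⟦X⟧) ^ jacobiExponent N i
  have key : 2 * (∏ k ∈ range N, (1 + X ^ (2 * (k + 1))) * (1 - X ^ (4 * (k + 1)))
      - ∑ k ∈ range N, X ^ (k * (k + 1)))
      = X ^ (2 * N) * (T * qPochhammer N) + (T * qPochhammer N - S) + X ^ (N * (N + 1)) := by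
    rw [mul_sub, two_mul_prod_eq_mul_prod_mul_qPochhammer,
      prod_one_add_X_pow_mul_one_add_X_pow_eq_sum]
    linear_combination hS
  rw [key]
  refine dvd_add (dvd_add ?_ (X_pow_dvd_sum_qBinom_mul_qPochhammer_sub N)) ?_
  · exact (pow_dvd_pow X (by omega)).mul_right _
  · exact pow_dvd_pow X (Nat.le_mul_of_pos_right N (Nat.succ_pos N))

end GaussTheta

/-- As formal power series over `ℤ`, `∑_{k≥0} t^{k(k+1)} = ∏_{k≥1} (1+t^{2k})(1-t^{4k})`,
stated coefficientwise via stabilized truncations. -/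
theorem jacobi_squared_identity :
    ∀ n : ℕ,
      PowerSeries.coeff n (∑ k ∈ Finset.range (n + 1), (PowerSeries.X : PowerSeries ℤ) ^ (k * (k + 1))) =
      PowerSeries.coeff n (∏ k ∈ Finset.range (n + 1),
        (1 + (PowerSeries.X : PowerSeries ℤ) ^ (2 * (k + 1))) * (1 - (PowerSeries.X : PowerSeries ℤ) ^ (4 * (k + 1)))) := by
  intro n
  have h := X_pow_dvd_iff.mp (GaussTheta.X_pow_dvd_two_mul_prod_sub_sum (R := ℤ) (n + 1)) n
    (Nat.lt_succ_self n)
  rw [show (2 : ℤ⟦X⟧) = C 2 from rfl, coeff_C_mul, map_sub] at h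
  omega
end
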